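/- arXiv:2602.13646 — 7 statements merged into one kernel-verified Lean document; each statement's English description precedes it below -/
import Mathlib

section
/- Let E be a real normed space, let β ∈ [0,1), and let m, g : ℕ → E satisfy m 0 = 0 and m (k+1) = β • (m k) + g k for all k. Then for every natural number K, ∑_{k=0}^{K} ‖m k‖² ≤ (2/(1−β)²) · ∑_{k=0}^{K} ‖g k‖². (Summed boundedness of the squared momentum norms, part (ii) of the paper's momentum-boundedness lemma.) -/
/-!
Jensen's inequality for the square with weights `β` and `1 - β` gives the one-step contraction
`‖β • x + y‖² ≤ β ‖x‖² + ‖y‖² / (1 - β)`. Summing it along the recursion, the term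
`β ∑ ‖m k‖²` is absorbed into the left-hand side, which yields the bound with the constant
`1 / (1 - β)²`.
-/

open Finset

theorem sq_mul_add_le_mul_sq_add_sq_div {β : ℝ} (hβ0 : 0 ≤ β) (hβ1 : β < 1) (a b : ℝ) :
    (β * a + b) ^ 2 ≤ β * a ^ 2 + b ^ 2 / (1 - β) := by
  have hβ : 0 < 1 - β := sub_pos.mpr hβ1
  have hgap : β * a ^ 2 + b ^ 2 / (1 - β) - (β * a + b) ^ 2
      = β * ((1 - β) * a - b) ^ 2 / (1 - β) := by
    field_simp
    ring
  have : 0 ≤ β * ((1 - β) * a - b) ^ 2 / (1 - β) := by positivity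
  linarith

theorem norm_smul_add_sq_le {E : Type*} [SeminormedAddCommGroup E] [NormedSpace ℝ E]
    {β : ℝ} (hβ0 : 0 ≤ β) (hβ1 : β < 1) (x y : E) :
    ‖β • x + y‖ ^ 2 ≤ β * ‖x‖ ^ 2 + ‖y‖ ^ 2 / (1 - β) := by
  have htri : ‖β • x + y‖ ≤ β * ‖x‖ + ‖y‖ := by
    simpa only [norm_smul, Real.norm_of_nonneg hβ0] using norm_add_le (β • x) y
  calc ‖β • x + y‖ ^ 2 ≤ (β * ‖x‖ + ‖y‖) ^ 2 := by gcongr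
    _ ≤ β * ‖x‖ ^ 2 + ‖y‖ ^ 2 / (1 - β) := sq_mul_add_le_mul_sq_add_sq_div hβ0 hβ1 _ _

theorem sum_range_le_div_of_le_mul_add {a c : ℕ → ℝ} {β : ℝ} (hβ1 : β < 1)
    (ha : ∀ k, 0 ≤ a k) (ha0 : a 0 = 0) (hrec : ∀ k, a (k + 1) ≤ β * a k + c k) (n : ℕ) :
    ∑ k ∈ range n, a k ≤ (∑ k ∈ range n, c k) / (1 - β) := by
  have hβ : 0 < 1 - β := sub_pos.mpr hβ1
  have hshift : ∑ k ∈ range n, a (k + 1) = ∑ k ∈ range n, a k + a n := by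
    rw [← sum_range_succ, sum_range_succ', ha0, add_zero]
  have hsum : ∑ k ∈ range n, a (k + 1) ≤ β * ∑ k ∈ range n, a k + ∑ k ∈ range n, c k := by
    rw [mul_sum, ← sum_add_distrib]
    exact sum_le_sum fun k _ => hrec k
  rw [le_div_iff₀ hβ]
  linarith [ha n]

/-- Summed boundedness of the squared momentum norms: if `m 0 = 0` and
`m (k+1) = β • m k + g k` with `β ∈ [0,1)`, then
`∑_{k=0}^{K} ‖m k‖² ≤ (2/(1-β)²) ∑_{k=0}^{K} ‖g k‖²`. -/
theorem momentum_summed_sq_bound {E : Type*} [NormedAddCommGroup E] [NormedSpace ℝ E]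
    (β : ℝ) (hβ0 : 0 ≤ β) (hβ1 : β < 1)
    (m g : ℕ → E) (hm0 : m 0 = 0)
    (hrec : ∀ k, m (k + 1) = β • m k + g k) :
    ∀ K : ℕ, ∑ k ∈ Finset.range (K + 1), ‖m k‖ ^ 2 ≤
      (2 / (1 - β) ^ 2) * ∑ k ∈ Finset.range (K + 1), ‖g k‖ ^ 2 := by
  intro K
  have hsum := sum_range_le_div_of_le_mul_add (a := fun k => ‖m k‖ ^ 2)
    (c := fun k => ‖g k‖ ^ 2 / (1 - β)) hβ1 (fun k => by positivity) (by simp [hm0])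
    (fun k => hrec k ▸ norm_smul_add_sq_le hβ0 hβ1 (m k) (g k)) (K + 1)
  have hG : 0 ≤ ∑ k ∈ range (K + 1), ‖g k‖ ^ 2 := sum_nonneg fun k _ => by positivity
  calc ∑ k ∈ range (K + 1), ‖m k‖ ^ 2
      ≤ (∑ k ∈ range (K + 1), ‖g k‖ ^ 2 / (1 - β)) / (1 - β) := hsum
    _ = (1 / (1 - β) ^ 2) * ∑ k ∈ range (K + 1), ‖g k‖ ^ 2 := by
      rw [← sum_div, div_div, ← sq, one_div_mul_eq_div]
    _ ≤ (2 / (1 - β) ^ 2) * ∑ k ∈ range (K + 1), ‖g k‖ ^ 2 := by gcongr; norm_num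
end

section
/- Let E and F be real normed spaces, let β ∈ [0,1) and L ≥ 0, let m, g : ℕ → E satisfy m 0 = 0 and m (k+1) = β • (m k) + g k for all k, and let x : ℕ → F be a sequence such that ‖g k − g (k−1)‖ ≤ L · ‖x k − x (k−1)‖ for all k ≥ 1. Then for every natural number K, ∑_{k=0}^{K} ‖m (k+1) − m k‖² ≤ (2L²/(1−β)²) · ∑_{k=0}^{K} ‖x (k+1) − x k‖² + (2/(1−β²)) · ‖g 0‖². (Summed boundedness of the squared momentum increments, part (iii) of the paper's momentum-boundedness lemma; note m 1 − m 0 = g 0.) -/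
/-! With `u k = ‖m (k + 1) - m k‖`, the recursion gives `u (k + 1) ≤ β u k + L ‖x (k + 1) - x k‖`
and `u 0 = ‖g 0‖`. Convexity of the square at the weights `β, 1 - β` turns this into
`u (k + 1)² ≤ β u k² + L² ‖x (k + 1) - x k‖² / (1 - β)`, and summing this perturbed contraction
bounds `(1 - β)² ∑ u k²` by `(1 - β) ‖g 0‖² + L² ∑ ‖x (k + 1) - x k‖²`. -/

open Finset

theorem one_sub_mul_sum_range_succ_le {β : ℝ} (hβ : 0 ≤ β) {a c : ℕ → ℝ}
    (ha : ∀ k, 0 ≤ a k) (h : ∀ k, a (k + 1) ≤ β * a k + c k) (n : ℕ) :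
    (1 - β) * ∑ k ∈ range (n + 1), a k ≤ a 0 + ∑ k ∈ range n, c k := by
  have hshift :
      ∑ k ∈ range n, a (k + 1) ≤ β * ∑ k ∈ range n, a k + ∑ k ∈ range n, c k := by
    rw [mul_sum, ← sum_add_distrib]
    exact sum_le_sum fun k _ => h k
  have hβa : 0 ≤ β * a n := mul_nonneg hβ (ha n)
  have hsplit_first := sum_range_succ' a n
  have hsplit_last := sum_range_succ a n
  linear_combination hshift + hβa + hsplit_first - β * hsplit_last

theorem sum_range_sq_le_of_le_mul_add {β : ℝ} (hβ0 : 0 ≤ β) (hβ1 : β < 1) {u w : ℕ → ℝ}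
    (hu : ∀ k, 0 ≤ u k) (h : ∀ k, u (k + 1) ≤ β * u k + w k) (n : ℕ) :
    (1 - β) ^ 2 * ∑ k ∈ range (n + 1), u k ^ 2 ≤
      (1 - β) * u 0 ^ 2 + ∑ k ∈ range n, w k ^ 2 := by
  have hsq (k : ℕ) : u (k + 1) ^ 2 ≤ β * u k ^ 2 + w k ^ 2 / (1 - β) :=
    (pow_le_pow_left₀ (hu _) (h k) 2).trans (sq_mul_add_le_mul_sq_add_sq_div hβ0 hβ1 _ _)
  have hsum := one_sub_mul_sum_range_succ_le hβ0 (fun k => sq_nonneg (u k)) hsq n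
  have hβ : 0 < 1 - β := by linarith
  calc (1 - β) ^ 2 * ∑ k ∈ range (n + 1), u k ^ 2
      = (1 - β) * ((1 - β) * ∑ k ∈ range (n + 1), u k ^ 2) := by ring
    _ ≤ (1 - β) * (u 0 ^ 2 + ∑ k ∈ range n, w k ^ 2 / (1 - β)) := by gcongr
    _ = (1 - β) * u 0 ^ 2 + ∑ k ∈ range n, w k ^ 2 := by
      rw [← sum_div]
      field_simp

theorem norm_momentum_increment_succ_le {E : Type*} [NormedAddCommGroup E] [NormedSpace ℝ E]
    {β : ℝ} (hβ : 0 ≤ β) {m g : ℕ → E} (hrec : ∀ k, m (k + 1) = β • m k + g k) (k : ℕ) :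
    ‖m (k + 2) - m (k + 1)‖ ≤ β * ‖m (k + 1) - m k‖ + ‖g (k + 1) - g k‖ := by
  have hdiff : m (k + 2) - m (k + 1) = β • (m (k + 1) - m k) + (g (k + 1) - g k) := by
    rw [hrec (k + 1), hrec k]
    module
  rw [hdiff]
  refine (norm_add_le _ _).trans ?_
  rw [norm_smul, Real.norm_of_nonneg hβ]

theorem momentum_increment_summed_sq_bound_general {E F : Type*}
    [NormedAddCommGroup E] [NormedSpace ℝ E]
    [NormedAddCommGroup F] [NormedSpace ℝ F]
    (β L : ℝ) (hβ0 : 0 ≤ β) (hβ1 : β < 1)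
    (m g : ℕ → E) (x : ℕ → F)
    (hm0 : m 0 = 0)
    (hrec : ∀ k, m (k + 1) = β • m k + g k)
    (hlip : ∀ k, 1 ≤ k → ‖g k - g (k - 1)‖ ≤ L * ‖x k - x (k - 1)‖) :
    ∀ K : ℕ, ∑ k ∈ Finset.range (K + 1), ‖m (k + 1) - m k‖ ^ 2 ≤
      (2 * L ^ 2 / (1 - β) ^ 2) * ∑ k ∈ Finset.range (K + 1), ‖x (k + 1) - x k‖ ^ 2
        + (2 / (1 - β ^ 2)) * ‖g 0‖ ^ 2 := by
  intro K
  have hstep (k : ℕ) :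
      ‖m (k + 1 + 1) - m (k + 1)‖ ≤ β * ‖m (k + 1) - m k‖ + L * ‖x (k + 1) - x k‖ :=
    (norm_momentum_increment_succ_le hβ0 hrec k).trans
      (by simpa using hlip (k + 1) (Nat.le_add_left 1 k))
  have hsum := sum_range_sq_le_of_le_mul_add hβ0 hβ1 (u := fun k => ‖m (k + 1) - m k‖)
    (w := fun k => L * ‖x (k + 1) - x k‖) (fun k => norm_nonneg _) hstep K
  have hfirst : m (0 + 1) - m 0 = g 0 := by simp [hrec, hm0]
  set T := ∑ k ∈ range (K + 1), ‖m (k + 1) - m k‖ ^ 2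
  set X := ∑ k ∈ range (K + 1), ‖x (k + 1) - x k‖ ^ 2
  have hX : ∑ k ∈ range K, (L * ‖x (k + 1) - x k‖) ^ 2 ≤ L ^ 2 * X := by
    simp_rw [mul_pow, ← mul_sum]
    exact mul_le_mul_of_nonneg_left (sum_le_sum_of_subset_of_nonneg
      (range_subset_range.2 K.le_succ) fun _ _ _ => sq_nonneg _) (sq_nonneg L)
  rw [hfirst] at hsum
  have hβ : 0 < 1 - β := by linarith
  have hconst : 1 / (1 - β) ≤ 2 / (1 - β ^ 2) := by
    rw [div_le_div_iff₀ hβ (by nlinarith)]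
    nlinarith
  calc T = ((1 - β) ^ 2 * T) / (1 - β) ^ 2 := by field_simp
    _ ≤ ((1 - β) * ‖g 0‖ ^ 2 + L ^ 2 * X) / (1 - β) ^ 2 := by gcongr; linarith
    _ = L ^ 2 / (1 - β) ^ 2 * X + 1 / (1 - β) * ‖g 0‖ ^ 2 := by field_simp; ring
    _ ≤ 2 * L ^ 2 / (1 - β) ^ 2 * X + 2 / (1 - β ^ 2) * ‖g 0‖ ^ 2 := by
      gcongr ?_ * _ + ?_ * _
      · gcongr
        linarith [sq_nonneg L]

/-- Summed boundedness of the squared momentum increments: if `m 0 = 0`,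
`m (k+1) = β • m k + g k` with `β ∈ [0,1)`, and
`‖g k - g (k-1)‖ ≤ L * ‖x k - x (k-1)‖` for all `k ≥ 1`, then
`∑_{k=0}^{K} ‖m (k+1) - m k‖² ≤ (2L²/(1-β)²) ∑_{k=0}^{K} ‖x (k+1) - x k‖² + (2/(1-β²)) ‖g 0‖²`. -/
theorem momentum_increment_summed_sq_bound {E F : Type*}
    [NormedAddCommGroup E] [NormedSpace ℝ E]
    [NormedAddCommGroup F] [NormedSpace ℝ F]
    (β L : ℝ) (hβ0 : 0 ≤ β) (hβ1 : β < 1) (hL : 0 ≤ L)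
    (m g : ℕ → E) (x : ℕ → F)
    (hm0 : m 0 = 0)
    (hrec : ∀ k, m (k + 1) = β • m k + g k)
    (hlip : ∀ k, 1 ≤ k → ‖g k - g (k - 1)‖ ≤ L * ‖x k - x (k - 1)‖) :
    ∀ K : ℕ, ∑ k ∈ Finset.range (K + 1), ‖m (k + 1) - m k‖ ^ 2 ≤
      (2 * L ^ 2 / (1 - β) ^ 2) * ∑ k ∈ Finset.range (K + 1), ‖x (k + 1) - x k‖ ^ 2
        + (2 / (1 - β ^ 2)) * ‖g 0‖ ^ 2 :=
  momentum_increment_summed_sq_bound_general β L hβ0 hβ1 m g x hm0 hrec hlip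
end

section
/- Let β ∈ [0,1) and let a, b : ℕ → ℝ be sequences of nonnegative reals satisfying a (k+1) ≤ β · (a k) + b k for all k. Then for every natural number K, ∑_{k=0}^{K} (a k)² ≤ (2/(1−β)²) · ∑_{k=0}^{K} (b k)² + (2/(1−β²)) · (a 0)². (The key geometric-recursion summation lemma used three times in the paper's convergence analysis.) -/
/-!
Squaring the recursion and splitting the cross term by Young's inequality gives the
contraction `a (k+1)² ≤ γ a k² + C b k²` with `γ = (1 + β²)/2 < 1` and
`C = (1 + β²)/(1 - β²)`. Summing it over
`k ≤ K` bounds `∑ a k²` by itself with factor `γ`, which can be absorbed; the remaining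
coefficient `2C/(1 - β²)` of `∑ b k²` is at most `2/(1 - β)²` because `β ≥ 0`.
-/

open Finset

section

variable {𝕜 : Type*} [Field 𝕜] [LinearOrder 𝕜] [IsStrictOrderedRing 𝕜]

theorem mul_add_sq_le_of_sq_lt_one {β : 𝕜} (hβ : β ^ 2 < 1) (x y : 𝕜) :
    (β * x + y) ^ 2 ≤ (1 + β ^ 2) / 2 * x ^ 2 + (1 + β ^ 2) / (1 - β ^ 2) * y ^ 2 := by
  have hβ' : 0 < 1 - β ^ 2 := sub_pos.mpr hβ
  have hgap : (1 + β ^ 2) / 2 * x ^ 2 + (1 + β ^ 2) / (1 - β ^ 2) * y ^ 2 - (β * x + y) ^ 2 =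
      ((1 - β ^ 2) * x - 2 * β * y) ^ 2 / (2 * (1 - β ^ 2)) := by
    field_simp
    ring
  have : 0 ≤ ((1 - β ^ 2) * x - 2 * β * y) ^ 2 / (2 * (1 - β ^ 2)) := by positivity
  linarith

theorem one_sub_mul_sum_range_succ_le_s3 {γ : 𝕜} (hγ : 0 ≤ γ) {s t : ℕ → 𝕜}
    (hs : ∀ k, 0 ≤ s k) (hrec : ∀ k, s (k + 1) ≤ γ * s k + t k) (K : ℕ) :
    (1 - γ) * ∑ k ∈ range (K + 1), s k ≤ s 0 + ∑ k ∈ range K, t k := by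
  have hshift : ∑ k ∈ range K, s (k + 1) ≤ γ * ∑ k ∈ range K, s k + ∑ k ∈ range K, t k := by
    rw [mul_sum, ← sum_add_distrib]
    exact sum_le_sum fun k _ => hrec k
  have hmono : ∑ k ∈ range K, s k ≤ ∑ k ∈ range (K + 1), s k := by
    rw [sum_range_succ]
    exact le_add_of_nonneg_right (hs K)
  have := mul_le_mul_of_nonneg_left hmono hγ
  rw [sum_range_succ'] at this ⊢
  linarith

theorem one_add_sq_div_one_sub_sq_sq_le {β : 𝕜} (hβ0 : 0 ≤ β) (hβ1 : β < 1) :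
    (1 + β ^ 2) / (1 - β ^ 2) ^ 2 ≤ 1 / (1 - β) ^ 2 := by
  have hβ1' : 0 < 1 - β := sub_pos.mpr hβ1
  have hβsq : 0 < 1 - β ^ 2 := by nlinarith
  rw [div_le_div_iff₀ (by positivity) (by positivity)]
  have : (1 - β ^ 2) ^ 2 = (1 - β) ^ 2 * (1 + β) ^ 2 := by ring
  rw [this]
  nlinarith [sq_nonneg (1 - β)]

end

theorem geometric_recursion_summed_sq_bound_general
    (β : ℝ) (hβ0 : 0 ≤ β) (hβ1 : β < 1)
    (a b : ℕ → ℝ) (ha : ∀ k, 0 ≤ a k)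
    (hrec : ∀ k, a (k + 1) ≤ β * a k + b k) :
    ∀ K : ℕ, ∑ k ∈ Finset.range (K + 1), (a k) ^ 2 ≤
      (2 / (1 - β) ^ 2) * ∑ k ∈ Finset.range (K + 1), (b k) ^ 2
        + (2 / (1 - β ^ 2)) * (a 0) ^ 2 := by
  intro K
  have hβsq : β ^ 2 < 1 := by nlinarith
  have hβsq' : 0 < 1 - β ^ 2 := sub_pos.mpr hβsq
  have hstep (k : ℕ) : a (k + 1) ^ 2 ≤ (1 + β ^ 2) / 2 * a k ^ 2 + (1 + β ^ 2) / (1 - β ^ 2) * b k ^ 2 :=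
    (pow_le_pow_left₀ (ha _) (hrec k) 2).trans (mul_add_sq_le_of_sq_lt_one hβsq _ _)
  have hsum := one_sub_mul_sum_range_succ_le_s3 (by positivity) (fun k => sq_nonneg (a k)) hstep K
  rw [← mul_sum] at hsum
  have hb_mono : ∑ k ∈ range K, b k ^ 2 ≤ ∑ k ∈ range (K + 1), b k ^ 2 := by
    rw [sum_range_succ]
    exact le_add_of_nonneg_right (sq_nonneg _)
  calc ∑ k ∈ range (K + 1), a k ^ 2
      = 2 / (1 - β ^ 2) * ((1 - (1 + β ^ 2) / 2) * ∑ k ∈ range (K + 1), a k ^ 2) := by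
        field_simp
        ring
    _ ≤ 2 / (1 - β ^ 2) * (a 0 ^ 2 + (1 + β ^ 2) / (1 - β ^ 2) * ∑ k ∈ range (K + 1), b k ^ 2) := by
        gcongr
        exact hsum.trans (by gcongr)
    _ = 2 * ((1 + β ^ 2) / (1 - β ^ 2) ^ 2) * ∑ k ∈ range (K + 1), b k ^ 2
          + 2 / (1 - β ^ 2) * a 0 ^ 2 := by
        field_simp
        ring
    _ ≤ 2 * (1 / (1 - β) ^ 2) * ∑ k ∈ range (K + 1), b k ^ 2 + 2 / (1 - β ^ 2) * a 0 ^ 2 := by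
        gcongr 2 * ?_ * _ + _
        exact one_add_sq_div_one_sub_sq_sq_le hβ0 hβ1
    _ = 2 / (1 - β) ^ 2 * ∑ k ∈ range (K + 1), b k ^ 2 + 2 / (1 - β ^ 2) * a 0 ^ 2 := by
        ring

/-- The key geometric-recursion summation lemma: if `a (k+1) ≤ β * a k + b k` with
`β ∈ [0,1)` and `a, b` nonnegative, then
`∑_{k=0}^{K} (a k)² ≤ (2/(1-β)²) ∑_{k=0}^{K} (b k)² + (2/(1-β²)) (a 0)²`. -/
theorem geometric_recursion_summed_sq_bound
    (β : ℝ) (hβ0 : 0 ≤ β) (hβ1 : β < 1)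
    (a b : ℕ → ℝ) (ha : ∀ k, 0 ≤ a k) (hb : ∀ k, 0 ≤ b k)
    (hrec : ∀ k, a (k + 1) ≤ β * a k + b k) :
    ∀ K : ℕ, ∑ k ∈ Finset.range (K + 1), (a k) ^ 2 ≤
      (2 / (1 - β) ^ 2) * ∑ k ∈ Finset.range (K + 1), (b k) ^ 2
        + (2 / (1 - β ^ 2)) * (a 0) ^ 2 :=
  geometric_recursion_summed_sq_bound_general β hβ0 hβ1 a b ha hrec
end

section
/- Let n ≥ 1, let E be a real inner product space, let M ⊆ E be nonempty, and let P : E → E be a nearest-point projection onto M which moreover satisfies ‖P z − P w‖ ≤ R · ‖z − w‖ for all z, w ∈ E, with R > 0. Let A be an n×n doubly stochastic matrix that is σ-contractive on mean-zero families, with σ ≥ 0. Let α ≥ 0, let x, v : Fin n → E, set x⁺ i := P((A·x) i − α • (v i)), and set x̄ := P((1/n) ∑_i x i) and x̄⁺ := P((1/n) ∑_i x⁺ i). Then √(∑_i ‖x⁺ i − x̄⁺‖²) ≤ σ R · √(∑_i ‖x i − x̄‖²) + α R · √(∑_i ‖v i‖²). (The paper's consensus-error one-step contraction lemma, Lemma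 3.) -/
/-!
Write `m` for the mean of `x` and `u := x - m`, a mean-zero family. Since
`∑ ‖y i - d‖² = ∑ ‖y i - ȳ‖² + n ‖ȳ - d‖²` for the mean `ȳ` of any family `y`, the
nearest-point property of `P` lets us replace `x̄⁺` by `x̄ = P m ∈ M`. Row-stochasticity gives
`(A·x) i - m = (A·u) i`, so the `R`-Lipschitz bound on `P` yields
`‖x⁺ i - x̄‖ ≤ R ‖(A·u) i - α v i‖`. Minkowski's inequality, the contraction of `A` on `u`,
and `‖u‖₂ ≤ ‖x - x̄‖₂` (the mean again) finish the proof.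
-/

open Finset

section BlockNorm

variable {ι E : Type*} [Fintype ι] [SeminormedAddCommGroup E]

lemma sqrt_sum_norm_sq_eq_norm_toLp (f : ι → E) :
    √(∑ i, ‖f i‖ ^ 2) = ‖WithLp.toLp 2 f‖ :=
  (PiLp.norm_eq_of_L2 _).symm

lemma sqrt_sum_norm_sub_sq_le (f g : ι → E) :
    √(∑ i, ‖f i - g i‖ ^ 2) ≤ √(∑ i, ‖f i‖ ^ 2) + √(∑ i, ‖g i‖ ^ 2) := by
  simp only [sqrt_sum_norm_sq_eq_norm_toLp]
  exact norm_sub_le (WithLp.toLp 2 f) (WithLp.toLp 2 g)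

lemma sqrt_sum_norm_smul_sq [NormedSpace ℝ E] (c : ℝ) (f : ι → E) :
    √(∑ i, ‖c • f i‖ ^ 2) = |c| * √(∑ i, ‖f i‖ ^ 2) := by
  simp only [sqrt_sum_norm_sq_eq_norm_toLp, ← Real.norm_eq_abs]
  exact norm_smul c (WithLp.toLp 2 f)

lemma sqrt_sum_norm_sq_le_mul {F : Type*} [SeminormedAddCommGroup F] {c : ℝ} (hc : 0 ≤ c)
    {f : ι → F} {g : ι → E} (h : ∀ i, ‖f i‖ ≤ c * ‖g i‖) :
    √(∑ i, ‖f i‖ ^ 2) ≤ c * √(∑ i, ‖g i‖ ^ 2) := by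
  rw [← Real.sqrt_sq hc, ← Real.sqrt_mul (sq_nonneg c), mul_sum]
  gcongr with i
  rw [← mul_pow]
  gcongr
  exact h i

end BlockNorm

section Mean

variable {ι E : Type*} [Fintype ι]

lemma sum_eq_card_smul_inv_card_smul_sum [AddCommGroup E] [Module ℝ E] (y : ι → E) :
    ∑ i, y i = (Fintype.card ι : ℝ) • ((Fintype.card ι : ℝ)⁻¹ • ∑ i, y i) := by
  rcases isEmpty_or_nonempty ι with hι | hι
  · simp
  · rw [smul_smul, mul_inv_cancel₀ (by positivity), one_smul]

lemma sum_sub_eq_zero_of_sum_eq_card_smul [AddCommGroup E] [Module ℝ E] {y : ι → E} {m : E}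
    (hm : ∑ i, y i = (Fintype.card ι : ℝ) • m) : ∑ i, (y i - m) = 0 := by
  rw [sum_sub_distrib, hm, sum_const, card_univ, Nat.cast_smul_eq_nsmul, sub_self]

lemma sum_smul_sub_eq_sum_smul_sub [AddCommGroup E] [Module ℝ E] {w : ι → ℝ}
    (hw : ∑ j, w j = 1) (y : ι → E) (m : E) :
    ∑ j, w j • (y j - m) = ∑ j, w j • y j - m := by
  simp only [smul_sub, sum_sub_distrib, ← sum_smul, hw, one_smul]

variable [NormedAddCommGroup E] [InnerProductSpace ℝ E]

lemma sum_norm_sub_sq_eq_add_card_mul {y : ι → E} {m : E}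
    (hm : ∑ i, y i = (Fintype.card ι : ℝ) • m) (d : E) :
    ∑ i, ‖y i - d‖ ^ 2 = ∑ i, ‖y i - m‖ ^ 2 + Fintype.card ι * ‖m - d‖ ^ 2 := by
  have hsplit : ∀ i, ‖y i - d‖ ^ 2
      = ‖y i - m‖ ^ 2 + 2 * inner ℝ (y i - m) (m - d) + ‖m - d‖ ^ 2 := fun i => by
    rw [← norm_add_sq_real, sub_add_sub_cancel]
  simp only [hsplit, sum_add_distrib, ← mul_sum, ← sum_inner,
    sum_sub_eq_zero_of_sum_eq_card_smul hm, inner_zero_left, mul_zero, add_zero, sum_const,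
    card_univ, nsmul_eq_mul]

lemma sum_norm_sub_sq_le_of_norm_le {y : ι → E} {m : E}
    (hm : ∑ i, y i = (Fintype.card ι : ℝ) • m) {d d' : E} (h : ‖m - d‖ ≤ ‖m - d'‖) :
    ∑ i, ‖y i - d‖ ^ 2 ≤ ∑ i, ‖y i - d'‖ ^ 2 := by
  rw [sum_norm_sub_sq_eq_add_card_mul hm d, sum_norm_sub_sq_eq_add_card_mul hm d']
  gcongr

end Mean

theorem consensus_one_step_contraction_general
    {E : Type*} [NormedAddCommGroup E] [InnerProductSpace ℝ E]
    (n : ℕ)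
    (M : Set E)
    (P : E → E) (hPin : ∀ z, P z ∈ M)
    (hPnear : ∀ z : E, ∀ y ∈ M, ‖z - P z‖ ≤ ‖z - y‖)
    (R : ℝ) (hR : 0 < R)
    (hPlip : ∀ z w : E, ‖P z - P w‖ ≤ R * ‖z - w‖)
    (A : Fin n → Fin n → ℝ)
    (hArow : ∀ i, ∑ j, A i j = 1)
    (σ : ℝ) (hσ : 0 ≤ σ)
    (hcontr : ∀ v : Fin n → E, (∑ i, v i) = 0 →
      Real.sqrt (∑ i, ‖∑ j, A i j • v j‖ ^ 2) ≤ σ * Real.sqrt (∑ i, ‖v i‖ ^ 2))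
    (α : ℝ) (hα : 0 ≤ α)
    (x v xplus : Fin n → E)
    (hxplus : ∀ i, xplus i = P ((∑ j, A i j • x j) - α • v i))
    (xbar xbarp : E)
    (hxbar : xbar = P ((n : ℝ)⁻¹ • ∑ i, x i))
    (hxbarp : xbarp = P ((n : ℝ)⁻¹ • ∑ i, xplus i)) :
    Real.sqrt (∑ i, ‖xplus i - xbarp‖ ^ 2) ≤
      σ * R * Real.sqrt (∑ i, ‖x i - xbar‖ ^ 2)
        + α * R * Real.sqrt (∑ i, ‖v i‖ ^ 2) := by
  set m : E := (n : ℝ)⁻¹ • ∑ i, x i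
  have hm : ∑ i, x i = (Fintype.card (Fin n) : ℝ) • m := by
    simpa only [Fintype.card_fin] using sum_eq_card_smul_inv_card_smul_sum x
  have hmp : ∑ i, xplus i = (Fintype.card (Fin n) : ℝ) • ((n : ℝ)⁻¹ • ∑ i, xplus i) := by
    simpa only [Fintype.card_fin] using sum_eq_card_smul_inv_card_smul_sum xplus
  set u : Fin n → E := fun j => x j - m
  have hstep : ∀ i, ‖xplus i - xbar‖ ≤ R * ‖∑ j, A i j • u j - α • v i‖ := fun i => by
    rw [hxplus, hxbar, sum_smul_sub_eq_sum_smul_sub (hArow i), sub_right_comm]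
    exact hPlip _ _
  calc √(∑ i, ‖xplus i - xbarp‖ ^ 2)
      ≤ √(∑ i, ‖xplus i - xbar‖ ^ 2) := by
        refine Real.sqrt_le_sqrt (sum_norm_sub_sq_le_of_norm_le hmp ?_)
        rw [hxbarp]
        exact hPnear _ _ (hxbar ▸ hPin _)
    _ ≤ R * √(∑ i, ‖∑ j, A i j • u j - α • v i‖ ^ 2) := sqrt_sum_norm_sq_le_mul hR.le hstep
    _ ≤ R * (√(∑ i, ‖∑ j, A i j • u j‖ ^ 2) + √(∑ i, ‖α • v i‖ ^ 2)) := by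
        gcongr
        exact sqrt_sum_norm_sub_sq_le _ _
    _ = R * (√(∑ i, ‖∑ j, A i j • u j‖ ^ 2) + α * √(∑ i, ‖v i‖ ^ 2)) := by
        rw [sqrt_sum_norm_smul_sq, abs_of_nonneg hα]
    _ ≤ R * (σ * √(∑ i, ‖x i - xbar‖ ^ 2) + α * √(∑ i, ‖v i‖ ^ 2)) := by
        gcongr
        refine (hcontr u (sum_sub_eq_zero_of_sum_eq_card_smul hm)).trans ?_
        exact mul_le_mul_of_nonneg_left
          (Real.sqrt_le_sqrt (sum_norm_sub_sq_le_of_norm_le hm (by simp))) hσ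
    _ = σ * R * √(∑ i, ‖x i - xbar‖ ^ 2) + α * R * √(∑ i, ‖v i‖ ^ 2) := by ring

/-- One-step contraction of the consensus error (the paper's Lemma 3):
with a nearest-point projection `P` onto `M` that is `R`-Lipschitz, a doubly
stochastic matrix `A` that is `σ`-contractive on mean-zero families, and the
update `x⁺ i = P((A·x) i - α • v i)`, one has
`‖x⁺ - x̄⁺‖₂ ≤ σ R ‖x - x̄‖₂ + α R ‖v‖₂`. -/
theorem consensus_one_step_contraction
    {E : Type*} [NormedAddCommGroup E] [InnerProductSpace ℝ E]
    (n : ℕ) (hn : 1 ≤ n)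
    (M : Set E) (hM : M.Nonempty)
    (P : E → E) (hPin : ∀ z, P z ∈ M)
    (hPnear : ∀ z : E, ∀ y ∈ M, ‖z - P z‖ ≤ ‖z - y‖)
    (R : ℝ) (hR : 0 < R)
    (hPlip : ∀ z w : E, ‖P z - P w‖ ≤ R * ‖z - w‖)
    (A : Fin n → Fin n → ℝ)
    (hA0 : ∀ i j, 0 ≤ A i j)
    (hArow : ∀ i, ∑ j, A i j = 1)
    (hAcol : ∀ j, ∑ i, A i j = 1)
    (σ : ℝ) (hσ : 0 ≤ σ)
    (hcontr : ∀ v : Fin n → E, (∑ i, v i) = 0 →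
      Real.sqrt (∑ i, ‖∑ j, A i j • v j‖ ^ 2) ≤ σ * Real.sqrt (∑ i, ‖v i‖ ^ 2))
    (α : ℝ) (hα : 0 ≤ α)
    (x v xplus : Fin n → E)
    (hxplus : ∀ i, xplus i = P ((∑ j, A i j • x j) - α • v i))
    (xbar xbarp : E)
    (hxbar : xbar = P ((n : ℝ)⁻¹ • ∑ i, x i))
    (hxbarp : xbarp = P ((n : ℝ)⁻¹ • ∑ i, xplus i)) :
    Real.sqrt (∑ i, ‖xplus i - xbarp‖ ^ 2) ≤
      σ * R * Real.sqrt (∑ i, ‖x i - xbar‖ ^ 2)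
        + α * R * Real.sqrt (∑ i, ‖v i‖ ^ 2) :=
  consensus_one_step_contraction_general n M P hPin hPnear R hR hPlip A hArow σ hσ hcontr α hα x v
    xplus hxplus xbar xbarp hxbar hxbarp
end

section
/- Let n ≥ 1, let E be a real inner product space, let β ∈ [0,1) and L ≥ 0, and let A be an n×n doubly stochastic matrix that is σ-contractive on mean-zero families with σ ≥ 0 and σ · √n ≤ 1/4. Let g : ℕ → Fin n → E satisfy ‖g k i‖ ≤ L for all k, i; let m : ℕ → Fin n → E satisfy m 0 i = 0 and m (k+1) i = β • (m k i) + g k i; and let s : ℕ → Fin n → E satisfy s 0 i = g 0 i and s (k+1) i = (A·(s k)) i + m (k+1) i − m k i. Assume moreover the tracking consistency property that (1/n) ∑_i s k i = (1/n) ∑_i g k i for every k. Then ‖s k i‖ ≤ 4L/(1−β) for every k and every i. (The paper's uniform-boundedness lemma for the gradient-tracking variable, Lemma with conclusion ‖s_{i,k}‖ ≤ 4L_g/(1−β).) -/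
/-!
Write `s k = ŝ k + d k` with `ŝ k` the mean and `d k` the deviation. Column stochasticity moves the
mean by the mean of the increment `m (k+1) - m k`, and row stochasticity lets `A` act on `d k`
alone, so `d (k+1) = A·d k + (centred increment)`. The increments have norm at most `2L` because
`‖m k‖ ≤ L/(1-β)`, and centring does not increase the block `ℓ²` norm, hence
`‖d (k+1)‖₂ ≤ σ‖d k‖₂ + 2L√n`; as `σ ≤ 1/4` this keeps `‖d k‖₂ ≤ (8/3)L√n`. One more step of the
recursion turns this into `‖s (k+1) i‖ ≤ ‖ŝ k‖ + σ(8/3)L√n + 2L ≤ L + (2/3)L + 2L`, where the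
consistency property bounds the mean by `L`.
-/

noncomputable section

variable {ι E : Type*} [Fintype ι]

def blockNorm [NormedAddCommGroup E] (v : ι → E) : ℝ := √(∑ i, ‖v i‖ ^ 2)

def blockMean [AddCommGroup E] [Module ℝ E] (v : ι → E) : E :=
  (Fintype.card ι : ℝ)⁻¹ • ∑ i, v i

def centered [AddCommGroup E] [Module ℝ E] (v : ι → E) : ι → E := fun i => v i - blockMean v

def blockAct [AddCommGroup E] [Module ℝ E] (A : ι → ι → ℝ) (v : ι → E) : ι → E :=
  fun i => ∑ j, A i j • v j

section Normed

variable [NormedAddCommGroup E]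

theorem blockNorm_eq_norm_toLp (v : ι → E) : blockNorm v = ‖WithLp.toLp 2 v‖ :=
  (PiLp.norm_eq_of_L2 _).symm

theorem norm_le_blockNorm (v : ι → E) (i : ι) : ‖v i‖ ≤ blockNorm v := by
  rw [blockNorm_eq_norm_toLp]
  exact PiLp.norm_apply_le (WithLp.toLp 2 v) i

theorem blockNorm_add_le (v w : ι → E) : blockNorm (v + w) ≤ blockNorm v + blockNorm w := by
  simp only [blockNorm_eq_norm_toLp, WithLp.toLp_add]
  exact norm_add_le _ _

theorem blockNorm_le_of_forall_norm_le {v : ι → E} {c : ℝ} (hc : 0 ≤ c) (h : ∀ i, ‖v i‖ ≤ c) :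
    blockNorm v ≤ c * √(Fintype.card ι) := by
  have hsum : ∑ i, ‖v i‖ ^ 2 ≤ Fintype.card ι * c ^ 2 :=
    calc ∑ i, ‖v i‖ ^ 2 ≤ ∑ _i : ι, c ^ 2 :=
          Finset.sum_le_sum fun i _ => pow_le_pow_left₀ (norm_nonneg (v i)) (h i) 2
      _ = Fintype.card ι * c ^ 2 := by simp
  calc blockNorm v ≤ √(Fintype.card ι * c ^ 2) := Real.sqrt_le_sqrt hsum
    _ = c * √(Fintype.card ι) := by rw [Real.sqrt_mul (by positivity), Real.sqrt_sq hc, mul_comm]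

end Normed

section Mean

variable [AddCommGroup E] [Module ℝ E] {A : ι → ι → ℝ}

theorem sum_eq_card_smul_blockMean (v : ι → E) :
    ∑ i, v i = (Fintype.card ι : ℝ) • blockMean v := by
  rcases isEmpty_or_nonempty ι with hι | hι
  · simp
  · rw [blockMean, smul_inv_smul₀ (by positivity)]

theorem sum_centered (v : ι → E) : ∑ i, centered v i = 0 := by
  simp [centered, Finset.sum_sub_distrib, sum_eq_card_smul_blockMean v, Nat.cast_smul_eq_nsmul]

theorem blockMean_add (v w : ι → E) : blockMean (v + w) = blockMean v + blockMean w := by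
  simp [blockMean, Finset.sum_add_distrib]

theorem blockAct_add_const (hrow : ∀ i, ∑ j, A i j = 1) (v : ι → E) (c : E)
    (i : ι) : blockAct A (fun j => v j + c) i = blockAct A v i + c := by
  simp [blockAct, smul_add, Finset.sum_add_distrib, ← Finset.sum_smul, hrow]

theorem sum_blockAct (hcol : ∀ j, ∑ i, A i j = 1) (v : ι → E) :
    ∑ i, blockAct A v i = ∑ i, v i := by
  simp [blockAct, Finset.sum_comm (γ := ι), ← Finset.sum_smul, hcol]

theorem blockMean_blockAct (hcol : ∀ j, ∑ i, A i j = 1) (v : ι → E) :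
    blockMean (blockAct A v) = blockMean v := by
  rw [blockMean, sum_blockAct hcol, blockMean]

theorem blockAct_eq_blockAct_centered_add (hrow : ∀ i, ∑ j, A i j = 1) (x : ι → E)
    (i : ι) :
    blockAct A x i = blockAct A (centered x) i + blockMean x := by
  rw [← blockAct_add_const hrow]
  simp [centered]

theorem centered_blockAct_add (hrow : ∀ i, ∑ j, A i j = 1) (hcol : ∀ j, ∑ i, A i j = 1)
    (x e : ι → E) : centered (blockAct A x + e) = blockAct A (centered x) + centered e := by
  ext i
  simp only [centered, Pi.add_apply, blockMean_add, blockMean_blockAct hcol,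
    blockAct_eq_blockAct_centered_add hrow x i]
  abel

end Mean

theorem norm_blockMean_le [NormedAddCommGroup E] [NormedSpace ℝ E] {v : ι → E} {L : ℝ}
    (hL : 0 ≤ L) (h : ∀ i, ‖v i‖ ≤ L) : ‖blockMean v‖ ≤ L := by
  rcases isEmpty_or_nonempty ι with hι | hι
  · simpa [blockMean] using hL
  have hcard : (0 : ℝ) < Fintype.card ι := by positivity
  rw [blockMean, norm_smul, norm_inv, Real.norm_natCast, inv_mul_le_iff₀ hcard]
  simpa [Finset.card_univ] using norm_sum_le_of_le Finset.univ fun i _ => h i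

theorem blockNorm_centered_le [NormedAddCommGroup E] [InnerProductSpace ℝ E] (v : ι → E) :
    blockNorm (centered v) ≤ blockNorm v := by
  set c := blockMean v
  have hexpand : ∑ i, ‖centered v i‖ ^ 2 = ∑ i, ‖v i‖ ^ 2 - Fintype.card ι * ‖c‖ ^ 2 := by
    simp only [centered, norm_sub_sq_real, Finset.sum_add_distrib, Finset.sum_sub_distrib,
      ← Finset.mul_sum, ← sum_inner, sum_eq_card_smul_blockMean v, real_inner_smul_left,
      real_inner_self_eq_norm_sq, Finset.sum_const, Finset.card_univ, nsmul_eq_mul]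
    ring
  refine Real.sqrt_le_sqrt ?_
  rw [hexpand]
  have : 0 ≤ (Fintype.card ι : ℝ) * ‖c‖ ^ 2 := by positivity
  linarith

theorem forall_le_of_le_mul_add {D : ℕ → ℝ} {σ c B : ℝ} (hσ : 0 ≤ σ) (h0 : D 0 ≤ B)
    (hstep : ∀ k, D (k + 1) ≤ σ * D k + c) (hB : σ * B + c ≤ B) : ∀ k, D k ≤ B
  | 0 => h0
  | k + 1 =>
    calc D (k + 1) ≤ σ * D k + c := hstep k
      _ ≤ σ * B + c := by gcongr; exact forall_le_of_le_mul_add hσ h0 hstep hB k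
      _ ≤ B := hB

section Momentum

variable [NormedAddCommGroup E] [NormedSpace ℝ E] {β L : ℝ} {x y : ℕ → E}

theorem norm_le_of_momentum (hβ0 : 0 ≤ β) (hβ1 : β < 1) (hL : 0 ≤ L) (hy : ∀ k, ‖y k‖ ≤ L)
    (hx0 : x 0 = 0) (hx : ∀ k, x (k + 1) = β • x k + y k) (k : ℕ) : ‖x k‖ ≤ L / (1 - β) := by
  have h1β : 0 < 1 - β := by linarith
  refine forall_le_of_le_mul_add (D := fun k => ‖x k‖) (c := L) hβ0
    (by simpa [hx0] using div_nonneg hL h1β.le) (fun k => ?_) (le_of_eq (by field_simp; ring)) k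
  calc ‖x (k + 1)‖ ≤ ‖β • x k‖ + ‖y k‖ := by rw [hx]; exact norm_add_le _ _
    _ ≤ β * ‖x k‖ + L := by rw [norm_smul, Real.norm_of_nonneg hβ0]; gcongr; exact hy k

theorem norm_momentum_sub_le (hβ0 : 0 ≤ β) (hβ1 : β < 1) (hL : 0 ≤ L) (hy : ∀ k, ‖y k‖ ≤ L)
    (hx0 : x 0 = 0) (hx : ∀ k, x (k + 1) = β • x k + y k) (k : ℕ) : ‖x (k + 1) - x k‖ ≤ 2 * L := by
  have h1β : 0 < 1 - β := by linarith
  have hdiff : x (k + 1) - x k = y k - (1 - β) • x k := by rw [hx, sub_smul, one_smul]; abel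
  calc ‖x (k + 1) - x k‖ ≤ ‖y k‖ + ‖(1 - β) • x k‖ := hdiff ▸ norm_sub_le _ _
    _ = ‖y k‖ + (1 - β) * ‖x k‖ := by rw [norm_smul, Real.norm_of_nonneg h1β.le]
    _ ≤ L + (1 - β) * (L / (1 - β)) := by
        gcongr
        exacts [hy k, norm_le_of_momentum hβ0 hβ1 hL hy hx0 hx k]
    _ = 2 * L := by field_simp; ring

end Momentum

section Tracking

variable (E) in
def IsContractiveOnMeanZero [NormedAddCommGroup E] [Module ℝ E] (A : ι → ι → ℝ) (σ : ℝ) : Prop :=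
  ∀ v : ι → E, ∑ i, v i = 0 → blockNorm (blockAct A v) ≤ σ * blockNorm v

variable [NormedAddCommGroup E] [NormedSpace ℝ E] {A : ι → ι → ℝ} {σ : ℝ}

theorem norm_blockAct_add_apply_le (hA : IsContractiveOnMeanZero E A σ)
    (hrow : ∀ i, ∑ j, A i j = 1) (x e : ι → E) (i : ι) :
    ‖(blockAct A x + e) i‖ ≤ ‖blockMean x‖ + σ * blockNorm (centered x) + ‖e i‖ := by
  have hcx : ‖blockAct A (centered x) i‖ ≤ σ * blockNorm (centered x) :=
    (norm_le_blockNorm _ i).trans (hA _ (sum_centered x))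
  rw [Pi.add_apply, blockAct_eq_blockAct_centered_add hrow]
  calc ‖blockAct A (centered x) i + blockMean x + e i‖
      ≤ ‖blockAct A (centered x) i‖ + ‖blockMean x‖ + ‖e i‖ := norm_add₃_le
    _ ≤ ‖blockMean x‖ + σ * blockNorm (centered x) + ‖e i‖ := by linarith

end Tracking

theorem blockNorm_centered_blockAct_add_le [NormedAddCommGroup E] [InnerProductSpace ℝ E]
    {A : ι → ι → ℝ} {σ : ℝ} (hA : IsContractiveOnMeanZero E A σ) (hrow : ∀ i, ∑ j, A i j = 1)
    (hcol : ∀ j, ∑ i, A i j = 1) (x e : ι → E) {c : ℝ} (hc : 0 ≤ c) (he : ∀ i, ‖e i‖ ≤ c) :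
    blockNorm (centered (blockAct A x + e)) ≤
      σ * blockNorm (centered x) + c * √(Fintype.card ι) := by
  rw [centered_blockAct_add hrow hcol]
  refine (blockNorm_add_le _ _).trans (add_le_add (hA _ (sum_centered x)) ?_)
  exact (blockNorm_centered_le e).trans (blockNorm_le_of_forall_norm_le hc he)

end

theorem tracking_variable_uniform_bound_general
    {E : Type*} [NormedAddCommGroup E] [InnerProductSpace ℝ E]
    (n : ℕ) (hn : 1 ≤ n)
    (β L : ℝ) (hβ0 : 0 ≤ β) (hβ1 : β < 1) (hL : 0 ≤ L)
    (A : Fin n → Fin n → ℝ)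
    (hArow : ∀ i, ∑ j, A i j = 1)
    (hAcol : ∀ j, ∑ i, A i j = 1)
    (σ : ℝ) (hσ : 0 ≤ σ) (hσn : σ * Real.sqrt (n : ℝ) ≤ 1 / 4)
    (hcontr : ∀ v : Fin n → E, (∑ i, v i) = 0 →
      Real.sqrt (∑ i, ‖∑ j, A i j • v j‖ ^ 2) ≤ σ * Real.sqrt (∑ i, ‖v i‖ ^ 2))
    (g m s : ℕ → Fin n → E)
    (hg : ∀ k i, ‖g k i‖ ≤ L)
    (hm0 : ∀ i, m 0 i = 0)
    (hmrec : ∀ k i, m (k + 1) i = β • m k i + g k i)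
    (hs0 : ∀ i, s 0 i = g 0 i)
    (hsrec : ∀ k i, s (k + 1) i = (∑ j, A i j • s k j) + m (k + 1) i - m k i)
    (hcons : ∀ k, (n : ℝ)⁻¹ • (∑ i, s k i) = (n : ℝ)⁻¹ • (∑ i, g k i)) :
    ∀ k i, ‖s k i‖ ≤ 4 * L / (1 - β) := by
  have hA : IsContractiveOnMeanZero E A σ := hcontr
  have hσ4 : σ ≤ 1 / 4 := by
    have : 1 ≤ √(n : ℝ) := Real.one_le_sqrt.mpr (by exact_mod_cast hn)
    nlinarith
  have hstep : ∀ k, s (k + 1) = blockAct A (s k) + (m (k + 1) - m k) := fun k =>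
    funext fun i => by rw [hsrec, add_sub_assoc]; rfl
  have hinc : ∀ k i, ‖m (k + 1) i - m k i‖ ≤ 2 * L := fun k i =>
    norm_momentum_sub_le (x := (m · i)) hβ0 hβ1 hL (hg · i) (hm0 i) (hmrec · i) k
  have hmean : ∀ k, ‖blockMean (s k)‖ ≤ L := fun k => by
    have : blockMean (s k) = blockMean (g k) := by simpa [blockMean] using hcons k
    exact this ▸ norm_blockMean_le hL (hg k)
  have hLn : 0 ≤ L * √(n : ℝ) := mul_nonneg hL (Real.sqrt_nonneg _)
  have hdev : ∀ k, blockNorm (centered (s k)) ≤ 8 / 3 * L * √(n : ℝ) := by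
    refine forall_le_of_le_mul_add (c := 2 * L * √(n : ℝ)) hσ ?_ (fun k => ?_)
      (by nlinarith [mul_le_mul_of_nonneg_right hσ4 hLn])
    · have h0 : ∀ i, ‖centered (s 0) i‖ ≤ 2 * L := fun i =>
        (norm_sub_le _ _).trans (by linarith [hs0 i ▸ hg 0 i, hmean 0])
      have := blockNorm_le_of_forall_norm_le (by positivity) h0
      rw [Fintype.card_fin] at this
      linarith
    · simpa [hstep k] using blockNorm_centered_blockAct_add_le hA hArow hAcol (s k)
        (m (k + 1) - m k) (by positivity) (hinc k)
  intro k i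
  refine le_trans ?_ (le_div_self (by positivity) (by linarith) (by linarith))
  cases k with
  | zero => linarith [hs0 i ▸ hg 0 i]
  | succ k =>
    calc ‖s (k + 1) i‖
        ≤ ‖blockMean (s k)‖ + σ * blockNorm (centered (s k)) + ‖m (k + 1) i - m k i‖ :=
          hstep k ▸ norm_blockAct_add_apply_le hA hArow _ _ i
      _ ≤ L + σ * (8 / 3 * L * √(n : ℝ)) + 2 * L := by gcongr; exacts [hmean k, hdev k, hinc k i]
      _ ≤ 4 * L := by nlinarith

/-- Uniform boundedness of the gradient-tracking variable: under the momentum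
recursion `m (k+1) i = β • m k i + g k i` (with `m 0 i = 0`, `‖g k i‖ ≤ L`), the
tracking recursion `s (k+1) i = (A·s k) i + m (k+1) i - m k i` (with
`s 0 i = g 0 i`), `σ √n ≤ 1/4`, and the tracking consistency property, one has
`‖s k i‖ ≤ 4L/(1-β)` for all `k` and `i`. -/
theorem tracking_variable_uniform_bound
    {E : Type*} [NormedAddCommGroup E] [InnerProductSpace ℝ E]
    (n : ℕ) (hn : 1 ≤ n)
    (β L : ℝ) (hβ0 : 0 ≤ β) (hβ1 : β < 1) (hL : 0 ≤ L)
    (A : Fin n → Fin n → ℝ)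
    (hA0 : ∀ i j, 0 ≤ A i j)
    (hArow : ∀ i, ∑ j, A i j = 1)
    (hAcol : ∀ j, ∑ i, A i j = 1)
    (σ : ℝ) (hσ : 0 ≤ σ) (hσn : σ * Real.sqrt (n : ℝ) ≤ 1 / 4)
    (hcontr : ∀ v : Fin n → E, (∑ i, v i) = 0 →
      Real.sqrt (∑ i, ‖∑ j, A i j • v j‖ ^ 2) ≤ σ * Real.sqrt (∑ i, ‖v i‖ ^ 2))
    (g m s : ℕ → Fin n → E)
    (hg : ∀ k i, ‖g k i‖ ≤ L)
    (hm0 : ∀ i, m 0 i = 0)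
    (hmrec : ∀ k i, m (k + 1) i = β • m k i + g k i)
    (hs0 : ∀ i, s 0 i = g 0 i)
    (hsrec : ∀ k i, s (k + 1) i = (∑ j, A i j • s k j) + m (k + 1) i - m k i)
    (hcons : ∀ k, (n : ℝ)⁻¹ • (∑ i, s k i) = (n : ℝ)⁻¹ • (∑ i, g k i)) :
    ∀ k i, ‖s k i‖ ≤ 4 * L / (1 - β) :=
  tracking_variable_uniform_bound_general n hn β L hβ0 hβ1 hL A hArow hAcol σ hσ hσn hcontr g m s hg
    hm0 hmrec hs0 hsrec hcons
end

section
/- Let n ≥ 1, let E be a real inner product space, let M ⊆ E be nonempty, and let P : E → E be a nearest-point projection onto M. Let A be an n×n doubly stochastic matrix, let α ≥ 0, let x, v : Fin n → E with x i ∈ M for every i, and set x⁺ i := P((A·x) i − α • (v i)). Then for every c ∈ E, √(∑_i ‖x⁺ i − x i‖²) ≤ 4 · √(∑_i ‖x i − c‖²) + 2α · √(∑_i ‖v i‖²). (The iterate-displacement bound ‖x_{k+1} − x_k‖ ≤ 4‖x_k − x̄_k‖ + 2α‖v_k‖ used in the paper's summed gradient-average bound.) -/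
/-!
Put `z i = (A·x) i - α • v i`, so that `x⁺ i = P (z i)`. As `x i ∈ M`, the nearest-point
property gives `‖x⁺ i - x i‖ ≤ ‖P (z i) - z i‖ + ‖z i - x i‖ ≤ 2 ‖z i - x i‖`. Since the rows of
`A` sum to one, `z - x = (A·y - y) - α • v` with `y = x - c`, and `A` is a contraction of the
block ℓ² norm (Jensen for `‖·‖²` along each row, then the column sums), so
`‖z - x‖₂ ≤ 2 ‖y‖₂ + α ‖v‖₂`.
-/

open Finset

section

variable {ι E : Type*} [SeminormedAddCommGroup E]

theorem norm_proj_sub_le_two_mul {M : Set E} {P : E → E}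
    (hP : ∀ z, ∀ y ∈ M, ‖z - P z‖ ≤ ‖z - y‖) {x : E} (hx : x ∈ M) (z : E) :
    ‖P z - x‖ ≤ 2 * ‖z - x‖ :=
  calc ‖P z - x‖ ≤ ‖P z - z‖ + ‖z - x‖ := norm_sub_le_norm_sub_add_norm_sub ..
    _ ≤ 2 * ‖z - x‖ := by linarith [norm_sub_rev z (P z), hP z x hx]

theorem PiLp.norm_le_mul_of_forall_norm_le [Fintype ι] {f g : PiLp 2 (fun _ : ι ↦ E)} {K : ℝ}
    (hK : 0 ≤ K) (hfg : ∀ i, ‖f i‖ ≤ K * ‖g i‖) : ‖f‖ ≤ K * ‖g‖ := by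
  rw [← sq_le_sq₀ (norm_nonneg _) (by positivity), mul_pow, PiLp.norm_sq_eq_of_L2,
    PiLp.norm_sq_eq_of_L2, mul_sum]
  gcongr with i
  rw [← mul_pow]
  exact pow_le_pow_left₀ (norm_nonneg _) (hfg i) 2

variable [NormedSpace ℝ E]

theorem norm_sum_smul_sq_le {s : Finset ι} {w : ι → ℝ} (hw₀ : ∀ i ∈ s, 0 ≤ w i)
    (hw₁ : ∑ i ∈ s, w i = 1) (y : ι → E) :
    ‖∑ i ∈ s, w i • y i‖ ^ 2 ≤ ∑ i ∈ s, w i * ‖y i‖ ^ 2 :=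
  (convexOn_univ_norm.pow (fun _ _ ↦ norm_nonneg _) 2).map_sum_le hw₀ hw₁ fun _ _ ↦ Set.mem_univ _

theorem norm_toLp_sum_smul_le_of_mem_doublyStochastic [Fintype ι] [DecidableEq ι]
    {A : Matrix ι ι ℝ} (hA : A ∈ doublyStochastic ℝ ι) (y : PiLp 2 (fun _ : ι ↦ E)) :
    ‖WithLp.toLp 2 (fun i ↦ ∑ j, A i j • y j)‖ ≤ ‖y‖ := by
  rw [← sq_le_sq₀ (norm_nonneg _) (norm_nonneg _), PiLp.norm_sq_eq_of_L2, PiLp.norm_sq_eq_of_L2]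
  calc ∑ i, ‖∑ j, A i j • y j‖ ^ 2
      ≤ ∑ i, ∑ j, A i j * ‖y j‖ ^ 2 := by
        gcongr with i
        exact norm_sum_smul_sq_le (fun j _ ↦ nonneg_of_mem_doublyStochastic hA)
          (sum_row_of_mem_doublyStochastic hA i) _
    _ = ∑ j, ‖y j‖ ^ 2 := by
        simp only [sum_comm (γ := ι), ← sum_mul, sum_col_of_mem_doublyStochastic hA, one_mul]

end

theorem iterate_displacement_bound_general
    {E : Type*} [NormedAddCommGroup E] [InnerProductSpace ℝ E]
    (n : ℕ)
    (M : Set E)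
    (P : E → E)
    (hPnear : ∀ z : E, ∀ y ∈ M, ‖z - P z‖ ≤ ‖z - y‖)
    (A : Fin n → Fin n → ℝ)
    (hA0 : ∀ i j, 0 ≤ A i j)
    (hArow : ∀ i, ∑ j, A i j = 1)
    (hAcol : ∀ j, ∑ i, A i j = 1)
    (α : ℝ) (hα : 0 ≤ α)
    (x v xplus : Fin n → E)
    (hxM : ∀ i, x i ∈ M)
    (hxplus : ∀ i, xplus i = P ((∑ j, A i j • x j) - α • v i)) :
    ∀ c : E, Real.sqrt (∑ i, ‖xplus i - x i‖ ^ 2) ≤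
      4 * Real.sqrt (∑ i, ‖x i - c‖ ^ 2) + 2 * α * Real.sqrt (∑ i, ‖v i‖ ^ 2) := by
  intro c
  classical
  have hA : A ∈ doublyStochastic ℝ (Fin n) := mem_doublyStochastic_iff_sum.2 ⟨hA0, hArow, hAcol⟩
  let L : (Fin n → E) → PiLp 2 (fun _ : Fin n ↦ E) := WithLp.toLp 2
  let z i := ∑ j, A i j • x j - α • v i
  let y i := x i - c
  let Ay i := ∑ j, A i j • y j
  have hproj : ‖L xplus - L x‖ ≤ 2 * ‖L z - L x‖ :=
    PiLp.norm_le_mul_of_forall_norm_le zero_le_two fun i ↦ by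
      simpa [L, hxplus] using norm_proj_sub_le_two_mul hPnear (hxM i) (z i)
  have hzx : L z - L x = (L Ay - L y) - α • L v := by
    ext i
    simp only [L, Ay, y, z, PiLp.sub_apply, PiLp.smul_apply, smul_sub, sum_sub_distrib,
      ← sum_smul, hArow, one_smul, sub_sub_sub_cancel_right]
    abel
  have hAy : ‖L Ay‖ ≤ ‖L y‖ := norm_toLp_sum_smul_le_of_mem_doublyStochastic hA (L y)
  have key : ‖L xplus - L x‖ ≤ 4 * ‖L y‖ + 2 * α * ‖L v‖ :=
    calc ‖L xplus - L x‖ ≤ 2 * ‖(L Ay - L y) - α • L v‖ := hzx ▸ hproj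
      _ ≤ 2 * (‖L Ay‖ + ‖L y‖ + α * ‖L v‖) := by
        grw [norm_sub_le, norm_sub_le, norm_smul, Real.norm_of_nonneg hα]
      _ ≤ 4 * ‖L y‖ + 2 * α * ‖L v‖ := by linarith
  simpa [L, y, PiLp.norm_eq_of_L2] using key

/-- Iterate-displacement bound: for `x⁺ i = P((A·x) i - α • v i)` with the `x i`
lying on `M`, a nearest-point projection `P` onto `M`, and doubly stochastic `A`,
one has `‖x⁺ - x‖₂ ≤ 4‖x - c‖₂ + 2α‖v‖₂` for every reference point `c`. -/
theorem iterate_displacement_bound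
    {E : Type*} [NormedAddCommGroup E] [InnerProductSpace ℝ E]
    (n : ℕ) (hn : 1 ≤ n)
    (M : Set E) (hM : M.Nonempty)
    (P : E → E) (hPin : ∀ z, P z ∈ M)
    (hPnear : ∀ z : E, ∀ y ∈ M, ‖z - P z‖ ≤ ‖z - y‖)
    (A : Fin n → Fin n → ℝ)
    (hA0 : ∀ i j, 0 ≤ A i j)
    (hArow : ∀ i, ∑ j, A i j = 1)
    (hAcol : ∀ j, ∑ i, A i j = 1)
    (α : ℝ) (hα : 0 ≤ α)
    (x v xplus : Fin n → E)
    (hxM : ∀ i, x i ∈ M)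
    (hxplus : ∀ i, xplus i = P ((∑ j, A i j • x j) - α • v i)) :
    ∀ c : E, Real.sqrt (∑ i, ‖xplus i - x i‖ ^ 2) ≤
      4 * Real.sqrt (∑ i, ‖x i - c‖ ^ 2) + 2 * α * Real.sqrt (∑ i, ‖v i‖ ^ 2) :=
  iterate_displacement_bound_general n M P hPnear A hA0 hArow hAcol α hα x v xplus hxM hxplus
end

section
/- Let n ≥ 1, let E be a real inner product space, and let A be an n×n real matrix with every row summing to 1 which is σ-contractive on mean-zero families, with σ ≥ 0. Then for every family v : Fin n → E and every index i, ‖∑_j ((A i j) − 1/n) • v j‖ ≤ σ · √n · max_j ‖v j‖. (The row-wise deviation-from-average bound used in the paper's induction establishing the uniform bound on the tracking variable.) -/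
/-!
Subtracting the mean `v̂` from every `v j` does not change `∑ j, (A i j - 1/n) • v j`, because the
rows of `A` sum to `1`; it equals row `i` of `A·(v - v̂)`. Since `v - v̂` has mean zero, this row is
bounded by `‖A·(v - v̂)‖₂ ≤ σ ‖v - v̂‖₂ ≤ σ ‖v‖₂ ≤ σ √n max_j ‖v j‖`.
-/

open Finset

section Mean

variable {ι E : Type*} [Fintype ι] [NormedAddCommGroup E] [InnerProductSpace ℝ E]

noncomputable def familyMean (v : ι → E) : E := (Fintype.card ι : ℝ)⁻¹ • ∑ j, v j

theorem sum_sub_inv_card_smul_eq_sum_smul_sub_familyMean {a : ι → ℝ} (ha : ∑ j, a j = 1)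
    (v : ι → E) :
    ∑ j, (a j - (Fintype.card ι : ℝ)⁻¹) • v j = ∑ j, a j • (v j - familyMean v) := by
  simp only [sub_smul, smul_sub, sum_sub_distrib, ← sum_smul, ha, one_smul]
  rw [familyMean, smul_sum]

variable [Nonempty ι]

theorem card_smul_familyMean (v : ι → E) :
    (Fintype.card ι : ℝ) • familyMean v = ∑ j, v j := by
  rw [familyMean, smul_smul, mul_inv_cancel₀ (by positivity), one_smul]

theorem sum_sub_familyMean (v : ι → E) : ∑ j, (v j - familyMean v) = 0 := by
  rw [sum_sub_distrib, sum_const, card_univ, ← Nat.cast_smul_eq_nsmul ℝ, card_smul_familyMean,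
    sub_self]

theorem sum_norm_sub_familyMean_sq (v : ι → E) :
    ∑ j, ‖v j - familyMean v‖ ^ 2 =
      ∑ j, ‖v j‖ ^ 2 - Fintype.card ι * ‖familyMean v‖ ^ 2 := by
  have hinner : ∑ j, inner ℝ (v j) (familyMean v) = Fintype.card ι * ‖familyMean v‖ ^ 2 := by
    rw [← sum_inner, ← card_smul_familyMean, real_inner_smul_left, real_inner_self_eq_norm_sq]
  simp only [norm_sub_sq_real, sum_add_distrib, sum_sub_distrib, ← mul_sum, hinner, sum_const,
    card_univ, nsmul_eq_mul]
  ring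

theorem sum_norm_sub_familyMean_sq_le (v : ι → E) :
    ∑ j, ‖v j - familyMean v‖ ^ 2 ≤ ∑ j, ‖v j‖ ^ 2 := by
  rw [sum_norm_sub_familyMean_sq]
  have : 0 ≤ (Fintype.card ι : ℝ) * ‖familyMean v‖ ^ 2 := by positivity
  linarith

end Mean

section SumOfSquares

variable {ι E : Type*} [Fintype ι] [SeminormedAddCommGroup E]

theorem norm_le_sqrt_sum_norm_sq (x : ι → E) (i : ι) : ‖x i‖ ≤ √(∑ j, ‖x j‖ ^ 2) :=
  Real.le_sqrt_of_sq_le <|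
    single_le_sum (f := fun j => ‖x j‖ ^ 2) (fun _ _ => by positivity) (mem_univ i)

theorem sqrt_sum_norm_sq_le_of_norm_le [Nonempty ι] {x : ι → E} {M : ℝ} (hM : ∀ j, ‖x j‖ ≤ M) :
    √(∑ j, ‖x j‖ ^ 2) ≤ √(Fintype.card ι) * M := by
  have hM0 : 0 ≤ M := (norm_nonneg _).trans (hM (Classical.arbitrary ι))
  rw [← Real.sqrt_sq hM0, ← Real.sqrt_mul (Nat.cast_nonneg _)]
  gcongr
  calc ∑ j, ‖x j‖ ^ 2 ≤ ∑ _j : ι, M ^ 2 := sum_le_sum fun j _ => by gcongr; exact hM j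
    _ = _ := by rw [sum_const, card_univ, nsmul_eq_mul]

end SumOfSquares

/-- Row-wise deviation-from-average bound: for a matrix `A` with row sums `1`
that is `σ`-contractive on mean-zero families,
`‖∑_j ((A i j) - 1/n) • v j‖ ≤ σ √n max_j ‖v j‖` for every family `v` and
every row `i`. -/
theorem rowwise_deviation_bound
    {E : Type*} [NormedAddCommGroup E] [InnerProductSpace ℝ E]
    (n : ℕ) (hn : 1 ≤ n)
    (A : Fin n → Fin n → ℝ)
    (hArow : ∀ i, ∑ j, A i j = 1)
    (σ : ℝ) (hσ : 0 ≤ σ)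
    (hcontr : ∀ v : Fin n → E, (∑ i, v i) = 0 →
      Real.sqrt (∑ i, ‖∑ j, A i j • v j‖ ^ 2) ≤ σ * Real.sqrt (∑ i, ‖v i‖ ^ 2))
    (v : Fin n → E) (i : Fin n) :
    ‖∑ j, (A i j - (n : ℝ)⁻¹) • v j‖ ≤
      σ * Real.sqrt (n : ℝ) *
        Finset.univ.sup' (Finset.univ_nonempty_iff.mpr ⟨⟨0, hn⟩⟩) (fun j => ‖v j‖) := by
  have : Nonempty (Fin n) := ⟨⟨0, hn⟩⟩
  have hM : ∀ j, ‖v j‖ ≤ univ.sup' univ_nonempty (fun j => ‖v j‖) :=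
    fun j => le_sup' (fun j => ‖v j‖) (mem_univ j)
  set w := fun j => v j - familyMean v
  have hdev := sum_sub_inv_card_smul_eq_sum_smul_sub_familyMean (hArow i) v
  rw [Fintype.card_fin] at hdev
  calc ‖∑ j, (A i j - (n : ℝ)⁻¹) • v j‖ = ‖∑ j, A i j • w j‖ := by rw [hdev]
    _ ≤ √(∑ k, ‖∑ j, A k j • w j‖ ^ 2) := norm_le_sqrt_sum_norm_sq (fun k => ∑ j, A k j • w j) i
    _ ≤ σ * √(∑ j, ‖w j‖ ^ 2) := hcontr w (sum_sub_familyMean v)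
    _ ≤ σ * √(∑ j, ‖v j‖ ^ 2) := by gcongr σ * √?_; exact sum_norm_sub_familyMean_sq_le v
    _ ≤ σ * (√n * univ.sup' univ_nonempty (fun j => ‖v j‖)) := by
      gcongr; simpa using sqrt_sum_norm_sq_le_of_norm_le hM
    _ = _ := by ring
end
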